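/- arXiv:2007.03821 — 2 statements merged into one kernel-verified Lean document; each statement's English description precedes it below -/
import Mathlib

section
/- For every integer n ≥ 0, the maximal number of runs a_n satisfies 4·a_n = 2n + (−1)^{n+1} + 1 (as an identity in the integers). -/
open Finset

/-- The word of a permutation `σ` of `Fin n`: the letter at (0-based) position `i`,
viewed as a natural number (the letters are `0, 1, ..., n-1`, identified with the usual
letters `1, ..., n`); junk value `0` outside the range. -/
def entry {n : ℕ} (σ : Equiv.Perm (Fin n)) (i : ℕ) : ℕ :=
  if h : i < n then (σ ⟨i, h⟩ : ℕ) else 0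

/-- Position `i` starts a run of the word `w`: either `i = 0`, or there is a
descent at position `i - 1`. -/
def WordRunStart (w : ℕ → ℕ) (i : ℕ) : Prop :=
  i = 0 ∨ w i < w (i - 1)

instance (w : ℕ → ℕ) (i : ℕ) : Decidable (WordRunStart w i) :=
  inferInstanceAs (Decidable (i = 0 ∨ w i < w (i - 1)))

/-- The number of runs of the length-`m` word `w` (maximal consecutive increasing subwords). -/
def wordRuns (w : ℕ → ℕ) (m : ℕ) : ℕ :=
  ((Finset.range m).filter fun i => WordRunStart w i).card

/-- The length-`m` word `w` is flattened: the first entries of its runs,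
read from left to right, increase. -/
def WordFlattened (w : ℕ → ℕ) (m : ℕ) : Prop :=
  ∀ i < m, ∀ j < m, WordRunStart w i → WordRunStart w j → i < j → w i < w j

instance (w : ℕ → ℕ) (m : ℕ) : Decidable (WordFlattened w m) :=
  inferInstanceAs (Decidable (∀ i < m, ∀ j < m,
    WordRunStart w i → WordRunStart w j → i < j → w i < w j))

/-- Position `i` (0-based) starts a run of the permutation `σ`. -/
def IsRunStart {n : ℕ} (σ : Equiv.Perm (Fin n)) (i : ℕ) : Prop :=
  i < n ∧ WordRunStart (entry σ) i

instance {n : ℕ} (σ : Equiv.Perm (Fin n)) (i : ℕ) : Decidable (IsRunStart σ i) :=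
  inferInstanceAs (Decidable (i < n ∧ WordRunStart (entry σ) i))

/-- The number of runs of the permutation `σ`. -/
def runCount {n : ℕ} (σ : Equiv.Perm (Fin n)) : ℕ :=
  wordRuns (entry σ) n

/-- `σ` is a flattened partition. -/
def IsFlattened {n : ℕ} (σ : Equiv.Perm (Fin n)) : Prop :=
  WordFlattened (entry σ) n

instance {n : ℕ} (σ : Equiv.Perm (Fin n)) : Decidable (IsFlattened σ) :=
  inferInstanceAs (Decidable (WordFlattened (entry σ) n))

/-- `flatSet n k`: the set `F_{n,k}` of flattened partitions over `[n]` with exactly `k` runs. -/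
def flatSet (n k : ℕ) : Finset (Equiv.Perm (Fin n)) :=
  Finset.univ.filter fun σ => IsFlattened σ ∧ runCount σ = k

/-- `f n k = |F_{n,k}|`, the number of flattened partitions over `[n]` with exactly `k` runs. -/
def f (n k : ℕ) : ℕ := (flatSet n k).card

/-- `a n`: the maximal number of runs of a flattened partition over `[n]` (with `a 0 = 0`,
since the empty permutation has no runs). -/
def a (n : ℕ) : ℕ :=
  (Finset.univ.filter fun σ : Equiv.Perm (Fin n) => IsFlattened σ).sup runCount

/-! In a flattened word two consecutive positions cannot both start a run: a descent
`w (i + 1) < w i` contradicts `w i < w (i + 1)` between run starts. Hence at most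
`⌈n / 2⌉` positions start a run, and the word `0, 2, 1, 4, 3, 6, 5, …` attains this bound. -/

-- `i ↦ i / 2` is injective on a set without two consecutive numbers.
lemma card_le_of_forall_succ_notMem {s : Finset ℕ} {m : ℕ} (hs : s ⊆ range m)
    (hsucc : ∀ i ∈ s, i + 1 ∉ s) : #s ≤ (m + 1) / 2 := by
  calc #s ≤ #(range ((m + 1) / 2)) := by
        refine card_le_card_of_injOn (· / 2) (fun i hi => ?_) (fun i hi j hj hij => ?_)
        · have := mem_range.1 (hs hi)
          simp only [coe_range, Set.mem_Iio]
          omega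
        · by_contra hne
          have : j = i + 1 ∨ i = j + 1 := by simp only at hij; omega
          rcases this with rfl | rfl
          · exact hsucc i hi hj
          · exact hsucc j hj hi
    _ = (m + 1) / 2 := card_range _

lemma card_filter_even_range (n : ℕ) : #((range n).filter Even) = (n + 1) / 2 := by
  induction n with
  | zero => rfl
  | succ n ih =>
    rw [range_add_one, filter_insert]
    split_ifs with h
    · rw [card_insert_of_notMem (by simp), ih]
      rcases h with ⟨k, rfl⟩
      omega
    · rw [ih]
      rcases Nat.not_even_iff_odd.1 h with ⟨k, rfl⟩
      omega

namespace WordFlattened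

variable {w : ℕ → ℕ} {m : ℕ}

lemma not_wordRunStart_succ (hw : WordFlattened w m) {i : ℕ} (hi : i + 1 < m)
    (hstart : WordRunStart w i) : ¬ WordRunStart w (i + 1) := by
  intro hnext
  have hlt := hw i (by omega) (i + 1) hi hstart hnext (Nat.lt_succ_self i)
  rcases hnext with h | h
  · omega
  · rw [Nat.add_sub_cancel] at h
    omega

lemma wordRuns_le (hw : WordFlattened w m) : wordRuns w m ≤ (m + 1) / 2 :=
  card_le_of_forall_succ_notMem (filter_subset _ _) fun i hi hsucc => by
    simp only [mem_filter, mem_range] at hi hsucc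
    exact hw.not_wordRunStart_succ hsucc.1 hi.2 hsucc.2

end WordFlattened

/-- The word `0, 2, 1, 4, 3, 6, 5, …` of length `n`, whose runs `0 2 | 1 4 | 3 6 | 5 …` all
have length two except possibly the last. A last letter without a partner stays in place
(`min … (n - 1)`), and `0 - 1 = 0` keeps position `0` fixed. -/
def pairSwap (n i : ℕ) : ℕ := if Odd i then min (i + 1) (n - 1) else i - 1

lemma pairSwap_lt {n i : ℕ} (h : i < n) : pairSwap n i < n := by
  unfold pairSwap; split <;> omega

lemma pairSwap_pairSwap {n i : ℕ} (h : i < n) : pairSwap n (pairSwap n i) = i := by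
  unfold pairSwap
  rcases Nat.even_or_odd' i with ⟨k, rfl | rfl⟩ <;> split_ifs <;> grind

lemma wordRunStart_pairSwap_iff {n i : ℕ} (h : i < n) :
    WordRunStart (pairSwap n) i ↔ Even i := by
  unfold WordRunStart pairSwap
  rcases Nat.even_or_odd' i with ⟨k, rfl | rfl⟩ <;> split_ifs <;> grind

lemma wordFlattened_pairSwap (n : ℕ) : WordFlattened (pairSwap n) n := by
  intro i hi j hj hsi hsj hij
  rw [wordRunStart_pairSwap_iff hi] at hsi
  rw [wordRunStart_pairSwap_iff hj] at hsj
  obtain ⟨k, rfl⟩ := hsi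
  obtain ⟨l, rfl⟩ := hsj
  unfold pairSwap
  split_ifs <;> grind

lemma wordRuns_pairSwap (n : ℕ) : wordRuns (pairSwap n) n = (n + 1) / 2 := by
  rw [wordRuns, ← card_filter_even_range n]
  exact congrArg card (filter_congr fun i hi => wordRunStart_pairSwap_iff (mem_range.1 hi))

section WordCongr

variable {w w' : ℕ → ℕ} {m : ℕ}

lemma wordRunStart_congr (hww' : ∀ i < m, w i = w' i) {i : ℕ} (hi : i < m) :
    WordRunStart w i ↔ WordRunStart w' i := by
  simp only [WordRunStart, hww' i hi, hww' (i - 1) (by omega)]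

lemma wordRuns_congr (hww' : ∀ i < m, w i = w' i) : wordRuns w m = wordRuns w' m :=
  congrArg card (filter_congr fun _ hi => wordRunStart_congr hww' (mem_range.1 hi))

lemma wordFlattened_congr (hww' : ∀ i < m, w i = w' i) :
    WordFlattened w m ↔ WordFlattened w' m := by
  refine forall₂_congr fun i hi => forall₂_congr fun j hj => ?_
  rw [wordRunStart_congr hww' hi, wordRunStart_congr hww' hj, hww' i hi, hww' j hj]

end WordCongr

def pairSwapPerm (n : ℕ) : Equiv.Perm (Fin n) :=
  Function.Involutive.toPerm (fun i => ⟨pairSwap n i, pairSwap_lt i.isLt⟩)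
    fun i => Fin.ext (pairSwap_pairSwap i.isLt)

lemma entry_pairSwapPerm {n i : ℕ} (h : i < n) : entry (pairSwapPerm n) i = pairSwap n i := by
  rw [entry, dif_pos h]
  rfl

lemma isFlattened_pairSwapPerm (n : ℕ) : IsFlattened (pairSwapPerm n) :=
  (wordFlattened_congr fun _ => entry_pairSwapPerm).2 (wordFlattened_pairSwap n)

lemma runCount_pairSwapPerm (n : ℕ) : runCount (pairSwapPerm n) = (n + 1) / 2 :=
  (wordRuns_congr fun _ => entry_pairSwapPerm).trans (wordRuns_pairSwap n)

lemma a_eq (n : ℕ) : a n = (n + 1) / 2 :=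
  le_antisymm (Finset.sup_le fun _ hσ => WordFlattened.wordRuns_le (mem_filter.1 hσ).2)
    (runCount_pairSwapPerm n ▸ le_sup (mem_filter.2 ⟨mem_univ _, isFlattened_pairSwapPerm n⟩))

/-- For every integer `n ≥ 0`, the maximal number of runs `a n` satisfies
`4 ⬝ a n = 2n + (-1)^(n+1) + 1` as an identity in the integers. -/
theorem a_closed_form (n : ℕ) :
    (4 * a n : ℤ) = 2 * n + (-1) ^ (n + 1) + 1 := by
  rw [a_eq]
  rcases Nat.even_or_odd' n with ⟨k, rfl | rfl⟩ <;>
    · simp only [pow_succ, pow_mul]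
      push_cast
      norm_num
      omega
end

section
/- For all integers n and k with 2 ≤ k < n, the cardinality of the set C_{n,k} equals (n−2) · f_{n−2, k−1}. -/
/-!
A flattened partition begins with its smallest letter, so every σ ∈ C_{n,k} has the form
1 X ⋯ with X ≥ 3. Deleting 1 and X and relabelling the remaining letters increasingly by
1, …, n - 2 gives a flattened partition with k - 1 runs: an order-preserving relabelling keeps
the descents, hence the runs and their order, and the run of σ starting at position 3 becomes
the first run. Conversely every X and every τ ∈ F_{n-2,k-1} reassemble into an element of
C_{n,k} (`consPerm`), because τ begins with its smallest letter, which is relabelled 2 < X.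
Letters and positions are 0-based in the code, so `consPerm x τ` has the letter `x + 2` at
position `1`.
-/

open Finset

/-- `Cset n k`: the set `C_{n,k}` of flattened partitions over `[n]` with exactly `k` runs
whose first run consists of exactly two elements (position `1` is not a run start, but
position `2` is), i.e. those of the form `1 X 2 ⋯` with `X ∈ {3, …, n}`. -/
def Cset (n k : ℕ) : Finset (Equiv.Perm (Fin n)) :=
  (flatSet n k).filter fun σ => ¬ IsRunStart σ 1 ∧ IsRunStart σ 2

open Equiv

section Words

variable {w u : ℕ → ℕ} {m : ℕ}

theorem wordRunStart_add_two_iff (hwu : ∀ i < m, ∀ j < m, w (i + 2) < w (j + 2) ↔ u i < u j)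
    (h2 : WordRunStart w 2) {i : ℕ} (hi : i < m) :
    WordRunStart w (i + 2) ↔ WordRunStart u i := by
  rcases i with _ | i
  · simpa [WordRunStart] using h2
  · simpa [WordRunStart] using hwu (i + 1) hi i (by omega)

theorem wordRuns_add_two (hwu : ∀ i < m, ∀ j < m, w (i + 2) < w (j + 2) ↔ u i < u j)
    (h1 : ¬ WordRunStart w 1) (h2 : WordRunStart w 2) :
    wordRuns w (m + 2) = wordRuns u m + 1 := by
  have h0 : WordRunStart w 0 := Or.inl rfl
  simp only [wordRuns, card_filter, sum_range_succ']
  rw [sum_congr rfl fun i hi =>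
    if_congr (wordRunStart_add_two_iff hwu h2 (mem_range.1 hi)) rfl rfl]
  simp [h0, h1]

theorem wordFlattened_add_two_iff (hwu : ∀ i < m, ∀ j < m, w (i + 2) < w (j + 2) ↔ u i < u j)
    (h1 : ¬ WordRunStart w 1) (h2 : WordRunStart w 2) (h0 : ∀ j < m, w 0 < w (j + 2)) :
    WordFlattened w (m + 2) ↔ WordFlattened u m := by
  have hstart {i : ℕ} (hi : i < m) := wordRunStart_add_two_iff hwu h2 hi
  constructor
  · intro hf i hi j hj hsi hsj hij
    exact (hwu i hi j hj).1 <| hf (i + 2) (by omega) (j + 2) (by omega)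
      ((hstart hi).2 hsi) ((hstart hj).2 hsj) (by omega)
  · intro hf i hi j hj hsi hsj hij
    rcases j with _ | _ | j
    · omega
    · exact absurd hsj h1
    rcases i with _ | _ | i
    · exact h0 j (by omega)
    · exact absurd hsi h1
    · exact (hwu i (by omega) j (by omega)).2 <| hf i (by omega) j (by omega)
        ((hstart (by omega)).1 hsi) ((hstart (by omega)).1 hsj) (by omega)

end Words

section Perms

variable {n : ℕ}

theorem entry_of_lt (σ : Perm (Fin n)) {i : ℕ} (hi : i < n) : entry σ i = σ ⟨i, hi⟩ :=
  dif_pos hi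

theorem entry_inj (σ : Perm (Fin n)) {i j : ℕ} (hi : i < n) (hj : j < n) :
    entry σ i = entry σ j ↔ i = j := by
  rw [entry_of_lt σ hi, entry_of_lt σ hj, Fin.val_inj, σ.apply_eq_iff_eq, Fin.mk.injEq]

theorem IsFlattened.entry_zero {σ : Perm (Fin n)} (hf : IsFlattened σ) (hn : 0 < n) :
    entry σ 0 = 0 := by
  set j := σ.symm ⟨0, hn⟩
  have hj : entry σ j = 0 := by simp [entry_of_lt σ j.isLt, j]
  by_contra h0
  have hj0 : 0 < (j : ℕ) := Nat.pos_of_ne_zero fun h => h0 (h ▸ hj)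
  have hprev : entry σ (j - 1) ≠ 0 := fun h =>
    absurd ((entry_inj σ (by omega) j.isLt).1 (h.trans hj.symm)) (by omega)
  have := hf 0 hn j j.isLt (Or.inl rfl) (Or.inr (by omega)) hj0
  omega

end Perms

section LetterEmb

variable {m : ℕ} (x : Fin m)

def letterEmb : Fin m ↪o Fin (m + 2) :=
  (Fin.succOrderEmb m).trans (x.addNat 2).succAboveOrderEmb

theorem letterEmb_apply (v : Fin m) : letterEmb x v = (x.addNat 2).succAbove v.succ := rfl

theorem addNat_two_ne_zero : x.addNat 2 ≠ 0 := by
  simp [Fin.ext_iff]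

theorem letterEmb_ne_zero (v : Fin m) : letterEmb x v ≠ 0 :=
  Fin.succAbove_ne_zero (addNat_two_ne_zero x) (Fin.succ_ne_zero v)

theorem letterEmb_ne_addNat_two (v : Fin m) : letterEmb x v ≠ x.addNat 2 :=
  Fin.succAbove_ne _ _

theorem letterEmb_lt_addNat_two_iff (v : Fin m) : letterEmb x v < x.addNat 2 ↔ v ≤ x := by
  rw [letterEmb_apply, Fin.succAbove_lt_iff_castSucc_lt, Fin.lt_def, Fin.le_def]
  simp

theorem exists_letterEmb_eq {y : Fin (m + 2)} (h0 : y ≠ 0) (hx : y ≠ x.addNat 2) :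
    ∃ v, letterEmb x v = y := by
  obtain ⟨z, rfl⟩ := Fin.exists_succAbove_eq hx
  obtain ⟨v, rfl⟩ := (Fin.exists_succ_eq (x := z)).2 fun hz =>
    h0 (by rw [hz]; exact Fin.succAbove_ne_zero_zero (addNat_two_ne_zero x))
  exact ⟨v, rfl⟩

end LetterEmb

section ConsPerm

variable {m : ℕ} (x : Fin m) (τ : Perm (Fin m))

theorem injective_cons_letterEmb :
    Function.Injective
      (Fin.cons 0 (Fin.cons (x.addNat 2) (letterEmb x ∘ τ)) : Fin (m + 2) → Fin (m + 2)) := by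
  refine Fin.cons_injective_iff.2 ⟨?_, Fin.cons_injective_iff.2
    ⟨?_, (letterEmb x).injective.comp τ.injective⟩⟩
  · simp [(addNat_two_ne_zero x).symm, letterEmb_ne_zero]
  · simp [letterEmb_ne_addNat_two]

noncomputable def consPerm : Perm (Fin (m + 2)) :=
  Equiv.ofBijective _ (Finite.injective_iff_bijective.mp (injective_cons_letterEmb x τ))

@[simp]
theorem consPerm_zero : consPerm x τ 0 = 0 := rfl

@[simp]
theorem consPerm_one : consPerm x τ 1 = x.addNat 2 := rfl

@[simp]
theorem consPerm_succ_succ (i : Fin m) : consPerm x τ i.succ.succ = letterEmb x (τ i) := rfl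

theorem entry_consPerm_add_two {i : ℕ} (hi : i < m) :
    entry (consPerm x τ) (i + 2) = letterEmb x (τ ⟨i, hi⟩) :=
  entry_of_lt _ (by omega : i + 2 < m + 2)

theorem entry_consPerm_zero : entry (consPerm x τ) 0 = 0 := rfl

theorem entry_consPerm_one : entry (consPerm x τ) 1 = x + 2 := rfl

theorem entry_consPerm_lt_iff : ∀ i < m, ∀ j < m,
    entry (consPerm x τ) (i + 2) < entry (consPerm x τ) (j + 2) ↔ entry τ i < entry τ j := by
  intro i hi j hj
  rw [entry_consPerm_add_two x τ hi, entry_consPerm_add_two x τ hj, entry_of_lt τ hi,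
    entry_of_lt τ hj, ← Fin.lt_def, ← Fin.lt_def, (letterEmb x).lt_iff_lt]

theorem not_wordRunStart_consPerm_one : ¬ WordRunStart (entry (consPerm x τ)) 1 := by
  rintro (h | h)
  · exact one_ne_zero h
  · simp [entry_consPerm_zero] at h

theorem isRunStart_consPerm_two (hτ : IsFlattened τ) : IsRunStart (consPerm x τ) 2 := by
  have hm := x.pos
  refine ⟨by omega, Or.inr ?_⟩
  have hτ0 : τ ⟨0, hm⟩ ≤ x := by
    rw [Fin.le_def, ← entry_of_lt τ hm, hτ.entry_zero hm]
    exact Nat.zero_le _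
  rw [entry_consPerm_add_two x τ hm, Nat.add_one_sub_one, entry_consPerm_one]
  exact (letterEmb_lt_addNat_two_iff x _).2 hτ0

theorem runCount_consPerm (h2 : IsRunStart (consPerm x τ) 2) :
    runCount (consPerm x τ) = runCount τ + 1 :=
  wordRuns_add_two (entry_consPerm_lt_iff x τ) (not_wordRunStart_consPerm_one x τ) h2.2

theorem isFlattened_consPerm_iff (h2 : IsRunStart (consPerm x τ) 2) :
    IsFlattened (consPerm x τ) ↔ IsFlattened τ :=
  wordFlattened_add_two_iff (entry_consPerm_lt_iff x τ) (not_wordRunStart_consPerm_one x τ) h2.2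
    fun j hj => by
      rw [entry_consPerm_zero, entry_consPerm_add_two x τ hj]
      exact Fin.pos_iff_ne_zero.2 (letterEmb_ne_zero x _)

theorem consPerm_mem_Cset_iff (k : ℕ) : consPerm x τ ∈ Cset (m + 2) (k + 1) ↔ τ ∈ flatSet m k := by
  have h1 : ¬ IsRunStart (consPerm x τ) 1 := fun h => not_wordRunStart_consPerm_one x τ h.2
  simp only [Cset, flatSet, mem_filter, mem_univ, true_and, h1, not_false_eq_true]
  constructor
  · rintro ⟨⟨hf, hr⟩, h2⟩
    exact ⟨(isFlattened_consPerm_iff x τ h2).1 hf, by rw [runCount_consPerm x τ h2] at hr; omega⟩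
  · rintro ⟨hf, rfl⟩
    have h2 := isRunStart_consPerm_two x τ hf
    exact ⟨⟨(isFlattened_consPerm_iff x τ h2).2 hf, runCount_consPerm x τ h2⟩, h2⟩

end ConsPerm

theorem consPerm_inj {m : ℕ} {x x' : Fin m} {τ τ' : Perm (Fin m)} :
    consPerm x τ = consPerm x' τ' ↔ x = x' ∧ τ = τ' := by
  refine ⟨fun h => ?_, fun ⟨hx, hτ⟩ => hx ▸ hτ ▸ rfl⟩
  obtain rfl : x = x' := (Fin.addNat_inj 2).1 (by simpa using congr($h 1))
  exact ⟨rfl, Equiv.ext fun i => (letterEmb x).injective (by simpa using congr($h i.succ.succ))⟩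

theorem exists_consPerm_eq_of_mem_Cset {m k : ℕ} {σ : Perm (Fin (m + 2))}
    (hσ : σ ∈ Cset (m + 2) k) : ∃ x τ, consPerm x τ = σ := by
  simp only [Cset, flatSet, mem_filter, mem_univ, true_and] at hσ
  obtain ⟨⟨hf, -⟩, -, h2n, h21 | h21⟩ := hσ
  · omega
  have h0 : σ 0 = 0 := Fin.ext (by simpa [entry_of_lt] using hf.entry_zero (by omega))
  have h21 : (σ ⟨2, h2n⟩ : ℕ) < σ 1 := by
    simpa [entry_of_lt σ h2n, entry_of_lt σ (by omega : 1 < m + 2)] using h21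
  have h2 : 0 < (σ ⟨2, h2n⟩ : ℕ) :=
    Fin.pos_iff_ne_zero.2 (h0 ▸ σ.injective.ne (by simp [Fin.ext_iff]))
  let x : Fin m := ⟨σ 1 - 2, by have := (σ 1).isLt; omega⟩
  have hx : x.addNat 2 = σ 1 := Fin.ext (by simp only [Fin.val_addNat, x]; omega)
  have hrest (i : Fin m) : ∃ v, letterEmb x v = σ i.succ.succ :=
    exists_letterEmb_eq x (h0 ▸ σ.injective.ne (Fin.succ_ne_zero _))
      (hx ▸ σ.injective.ne (by simp [Fin.ext_iff]))
  choose t ht using hrest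
  have ht_inj : Function.Injective t := fun i j h =>
    Fin.succ_injective _ (Fin.succ_injective _ (σ.injective (by rw [← ht, ← ht, h])))
  refine ⟨x, Equiv.ofBijective t (Finite.injective_iff_bijective.mp ht_inj), Equiv.ext fun p => ?_⟩
  cases p using Fin.cases with
  | zero => simp [h0]
  | succ p =>
    cases p using Fin.cases with
    | zero => simpa using hx
    | succ i => simp [ht]

/-- For all integers `n`, `k` with `2 ≤ k < n`, the cardinality of `C_{n,k}` is
`(n - 2) ⬝ f_{n-2, k-1}`. -/
theorem card_Cset (n k : ℕ) (hk : 2 ≤ k) (hkn : k < n) :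
    (Cset n k).card = (n - 2) * f (n - 2) (k - 1) := by
  obtain ⟨m, rfl⟩ : ∃ m, n = m + 2 := ⟨n - 2, by omega⟩
  obtain ⟨k, rfl⟩ : ∃ k', k = k' + 1 := ⟨k - 1, by omega⟩
  rw [Nat.add_sub_cancel, Nat.add_sub_cancel,
    show m * f m k = ((univ : Finset (Fin m)) ×ˢ flatSet m k).card by
       rw [card_product, card_univ, Fintype.card_fin, f]]
  symm
  refine card_bij (fun p _ => consPerm p.1 p.2) (fun p hp => ?_) (fun p _ q _ h => ?_)
    (fun σ hσ => ?_)
  · exact (consPerm_mem_Cset_iff p.1 p.2 k).2 (mem_product.1 hp).2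
  · exact Prod.ext_iff.2 (consPerm_inj.1 h)
  · obtain ⟨x, τ, rfl⟩ := exists_consPerm_eq_of_mem_Cset hσ
    exact ⟨(x, τ), mem_product.2 ⟨mem_univ x, (consPerm_mem_Cset_iff x τ k).1 hσ⟩, rfl⟩
end
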